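/- Let G be a triangle-free graph without isolated vertices. Then G is in W₂ if and only if for every edge ab of G, the graph G_{ab} = G \ (N_G(a) ∪ N_G(b)) is well-covered with α(G_{ab}) = α(G) − 1. -/

import Mathlib

open Finset

section EdgeIdealPaper

variable {V : Type*} [Fintype V] [DecidableEq V]

/-- `S` is an independent set of vertices in `G`. -/
def IsIndep (G : SimpleGraph V) (S : Finset V) : Prop :=
  ∀ u ∈ S, ∀ v ∈ S, ¬ G.Adj u v

/-- `S` is a maximal independent set of the induced subgraph of `G` on `A`. -/
def IsMaxIndepIn (G : SimpleGraph V) (A S : Finset V) : Prop :=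
  S ⊆ A ∧ IsIndep G S ∧ ∀ v ∈ A, v ∉ S → ¬ IsIndep G (insert v S)

open scoped Classical in
/-- The independence number of the induced subgraph of `G` on `A`. -/
noncomputable def alphaIn (G : SimpleGraph V) (A : Finset V) : ℕ :=
  ((A.powerset).filter (fun S => IsIndep G S)).sup Finset.card

/-- The induced subgraph of `G` on `A` is well-covered. -/
def WellCoveredIn (G : SimpleGraph V) (A : Finset V) : Prop :=
  ∀ S, IsMaxIndepIn G A S → S.card = alphaIn G A

/-- The induced subgraph of `G` on `A` is in the class `W₂`. -/
def W2In (G : SimpleGraph V) (A : Finset V) : Prop :=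
  WellCoveredIn G A ∧
    ∀ x ∈ A, WellCoveredIn G (A.erase x) ∧ alphaIn G (A.erase x) = alphaIn G A

open scoped Classical in
/-- The neighborhood of a vertex `a` in `G`, as a `Finset`. -/
noncomputable def nbr (G : SimpleGraph V) (a : V) : Finset V :=
  univ.filter (fun v => G.Adj a v)

open scoped Classical in
/-- The neighborhood `N_G(S)` of a set `S` of vertices: vertices outside `S`
adjacent to some vertex of `S`. -/
noncomputable def nbrSet (G : SimpleGraph V) (S : Finset V) : Finset V :=
  univ.filter (fun v => v ∉ S ∧ ∃ u ∈ S, G.Adj u v)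

/-- The vertex set of the localization `G_S = G \ (S ∪ N_G(S))`. -/
noncomputable def loc (G : SimpleGraph V) (S : Finset V) : Finset V :=
  univ \ (S ∪ nbrSet G S)

/-- The vertex set of `G_{ab} = G \ (N_G(a) ∪ N_G(b))`. -/
noncomputable def locE (G : SimpleGraph V) (a b : V) : Finset V :=
  univ \ (nbr G a ∪ nbr G b)

/-- The induced subgraph of `G` on `A` has no isolated vertices. -/
def NoIsolatedIn (G : SimpleGraph V) (A : Finset V) : Prop :=
  ∀ v ∈ A, ∃ u ∈ A, G.Adj v u

open scoped Classical in
/-- The reduced Euler characteristic `∑_{F} (-1)^{|F|-1}` (the empty face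
contributing `-1`) of the independence complex of the induced subgraph of `G` on `A`. -/
noncomputable def indEuler (G : SimpleGraph V) (A : Finset V) : ℤ :=
  -∑ S ∈ (A.powerset).filter (fun S => IsIndep G S), (-1 : ℤ) ^ S.card

end EdgeIdealPaper

/-!
If `G ∈ W₂` and `T` is a maximal independent set of `G_{ab}`, then `T ∪ {b}` is already maximal
in `G`: a vertex `p` that could be added is adjacent to `a`, and the vertex `z` that replaces `p`
in a maximum independent set of `G \ p` is then, by triangle-freeness, a vertex of `G_{ab}`
extending `T`.

Conversely, for an edge `uw` and a maximal independent set `A` of `G_{uw}`, the set `A ∪ {u}` is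
maximum. Given a maximal independent set `N` of `G \ x`, pick a maximum independent set `W`
avoiding `x` (one exists since `x` has a neighbour) with `|N ∩ W|` as large as possible. If
`N ⊄ W`, take `u ∈ N \ W` and a neighbour `w ∈ W` of `u`, and extend `W \ N(u)` to a maximal
independent set `A` of `G_{uw}`. If `x ∉ A`, then `A ∪ {u}` meets `N` in more vertices than `W`
does; so `x ∈ A` for every such `w`. Then `x` has no neighbour in `W`, contradicting the
maximality of `W`. Hence `N = W`, so `G \ x` is well-covered with `α(G \ x) = α(G)`, and so is
`G`, as a maximal independent set of `G` missing `x` is maximal in `G \ x`.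
-/

section

variable {V : Type*} {G : SimpleGraph V}

theorem IsIndep.mono {S T : Finset V} (hT : IsIndep G T) (h : S ⊆ T) : IsIndep G S :=
  fun u hu v hv => hT u (h hu) v (h hv)

theorem isIndep_empty : IsIndep G ∅ := by
  simp [IsIndep]

theorem card_le_alphaIn {A S : Finset V} (hSA : S ⊆ A) (hS : IsIndep G S) :
    S.card ≤ alphaIn G A := by
  classical
  exact le_sup (f := Finset.card) (mem_filter.2 ⟨mem_powerset.2 hSA, hS⟩)

theorem exists_card_eq_alphaIn (G : SimpleGraph V) (A : Finset V) :
    ∃ S ⊆ A, IsIndep G S ∧ S.card = alphaIn G A := by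
  classical
  obtain ⟨S, hS, hSc⟩ := exists_mem_eq_sup _
    ⟨∅, mem_filter.2 ⟨empty_mem_powerset A, isIndep_empty⟩⟩ Finset.card
  rw [mem_filter, mem_powerset] at hS
  exact ⟨S, hS.1, hS.2, hSc.symm⟩

theorem mem_nbr [Fintype V] {a v : V} : v ∈ nbr G a ↔ G.Adj a v := by
  simp [nbr]

variable [DecidableEq V]

theorem IsIndep.insert {T : Finset V} {v : V} (hT : IsIndep G T)
    (h : ∀ u ∈ T, ¬ G.Adj u v) : IsIndep G (insert v T) := by
  intro c hc d hd
  rcases mem_insert.1 hc with rfl | hcT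
  · rcases mem_insert.1 hd with rfl | hdT
    · exact G.irrefl
    · exact fun hcd => h d hdT hcd.symm
  · rcases mem_insert.1 hd with rfl | hdT
    · exact h c hcT
    · exact hT c hcT d hdT

theorem one_le_alphaIn {A : Finset V} {a : V} (ha : a ∈ A) : 1 ≤ alphaIn G A := by
  simpa using card_le_alphaIn (singleton_subset_iff.2 ha) (isIndep_empty.insert (by simp))

theorem exists_isMaxIndepIn_superset {A S : Finset V} (hSA : S ⊆ A) (hS : IsIndep G S) :
    ∃ T, S ⊆ T ∧ IsMaxIndepIn G A T := by
  classical
  obtain ⟨T, hT, hTmax⟩ := exists_max_image (A.powerset.filter fun T => S ⊆ T ∧ IsIndep G T)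
    Finset.card ⟨S, mem_filter.2 ⟨mem_powerset.2 hSA, Subset.refl S, hS⟩⟩
  rw [mem_filter, mem_powerset] at hT
  refine ⟨T, hT.2.1, hT.1, hT.2.2, fun v hvA hvT hind => ?_⟩
  have hle := hTmax (insert v T) (mem_filter.2 ⟨mem_powerset.2 (insert_subset hvA hT.1),
    hT.2.1.trans (subset_insert v T), hind⟩)
  rw [card_insert_of_notMem hvT] at hle
  omega

theorem IsMaxIndepIn.exists_adj {A T : Finset V} {v : V} (hT : IsMaxIndepIn G A T)
    (hvA : v ∈ A) (hvT : v ∉ T) : ∃ u ∈ T, G.Adj u v := by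
  by_contra! hno
  exact hT.2.2 v hvA hvT (hT.2.1.insert hno)

theorem IsMaxIndepIn.eq_of_subset {A S T : Finset V} (hT : IsMaxIndepIn G A T) (hSA : S ⊆ A)
    (hS : IsIndep G S) (hTS : T ⊆ S) : T = S := by
  refine Subset.antisymm hTS fun v hv => ?_
  by_contra hvT
  exact hT.2.2 v (hSA hv) hvT (hS.mono (insert_subset hv hTS))

theorem IsMaxIndepIn.of_subset {A B M : Finset V} (hM : IsMaxIndepIn G A M) (hMB : M ⊆ B)
    (hBA : B ⊆ A) : IsMaxIndepIn G B M :=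
  ⟨hMB, hM.2.1, fun v hv => hM.2.2 v (hBA hv)⟩

theorem isMaxIndepIn_of_card_eq_alphaIn {A S : Finset V} (hSA : S ⊆ A) (hS : IsIndep G S)
    (hcard : S.card = alphaIn G A) : IsMaxIndepIn G A S := by
  refine ⟨hSA, hS, fun v hvA hvS hind => ?_⟩
  have hle := card_le_alphaIn (insert_subset hvA hSA) hind
  rw [card_insert_of_notMem hvS] at hle
  omega

theorem wellCoveredIn_and_alphaIn_eq_iff {A : Finset V} {k : ℕ} :
    WellCoveredIn G A ∧ alphaIn G A = k ↔ ∀ T, IsMaxIndepIn G A T → T.card = k := by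
  refine ⟨fun ⟨hwc, hα⟩ T hT => hα ▸ hwc T hT, fun h => ?_⟩
  obtain ⟨S, hSA, hS, hSc⟩ := exists_card_eq_alphaIn G A
  have hα : alphaIn G A = k := hSc ▸ h S (isMaxIndepIn_of_card_eq_alphaIn hSA hS hSc)
  exact ⟨fun T hT => hα ▸ h T hT, hα⟩

variable [Fintype V]

theorem mem_locE {a b v : V} : v ∈ locE G a b ↔ ¬ G.Adj a v ∧ ¬ G.Adj b v := by
  simp [locE, nbr]

theorem IsIndep.exists_isMaxIndepIn_locE_superset_sdiff {W : Finset V} {w : V}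
    (hW : IsIndep G W) (u : V) (hw : w ∈ W) :
    ∃ A, IsMaxIndepIn G (locE G u w) A ∧ W \ nbr G u ⊆ A := by
  have hsub : W \ nbr G u ⊆ locE G u w := fun m hm => by
    rw [mem_sdiff, mem_nbr] at hm
    exact mem_locE.2 ⟨hm.2, hW w hw m hm.1⟩
  obtain ⟨A, hWA, hA⟩ := exists_isMaxIndepIn_superset hsub (hW.mono sdiff_subset)
  exact ⟨A, hA, hWA⟩

/-- `G_{ab}` is well-covered with `α(G_{ab}) + 1 = α(G)` for every edge `ab`; adding `1` on the
left avoids the truncated subtraction in `α(G) - 1`. -/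
def EdgeLocalizationsWellCovered (G : SimpleGraph V) : Prop :=
  ∀ a b, G.Adj a b → ∀ T, IsMaxIndepIn G (locE G a b) T → T.card + 1 = alphaIn G univ

theorem edgeLocalizationsWellCovered_iff :
    EdgeLocalizationsWellCovered G ↔ ∀ a b : V, G.Adj a b → WellCoveredIn G (locE G a b) ∧
      alphaIn G (locE G a b) = alphaIn G univ - 1 := by
  refine forall₂_congr fun a b => imp_congr_right fun _ => ?_
  rw [wellCoveredIn_and_alphaIn_eq_iff]
  have := one_le_alphaIn (G := G) (mem_univ a)
  exact forall_congr' fun T => imp_congr_right fun _ => by omega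

namespace EdgeLocalizationsWellCovered

variable (H : EdgeLocalizationsWellCovered G)
include H

theorem isIndep_insert_and_card_eq {u w : V} {A : Finset V} (huw : G.Adj u w)
    (hA : IsMaxIndepIn G (locE G u w) A) :
    IsIndep G (insert u A) ∧ (insert u A).card = alphaIn G univ := by
  have huA : u ∉ A := fun hu => (mem_locE.1 (hA.1 hu)).2 huw.symm
  refine ⟨hA.2.1.insert fun m hm hmu => (mem_locE.1 (hA.1 hm)).1 hmu.symm, ?_⟩
  rw [card_insert_of_notMem huA]
  exact H u w huw A hA

theorem exists_card_eq_alphaIn_notMem {x y : V} (hxy : G.Adj x y) :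
    ∃ W, x ∉ W ∧ IsIndep G W ∧ W.card = alphaIn G univ := by
  obtain ⟨T, -, hT⟩ := exists_isMaxIndepIn_superset (empty_subset (locE G y x)) isIndep_empty
  obtain ⟨hind, hcard⟩ := H.isIndep_insert_and_card_eq hxy.symm hT
  refine ⟨insert y T, fun hx => ?_, hind, hcard⟩
  rcases mem_insert.1 hx with rfl | hx
  · exact G.irrefl hxy
  · exact (mem_locE.1 (hT.1 hx)).1 hxy.symm

theorem card_eq_of_isMaxIndepIn_erase {x : V} {N : Finset V}
    (hW₀ : ∃ W, x ∉ W ∧ IsIndep G W ∧ W.card = alphaIn G univ)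
    (hN : IsMaxIndepIn G (univ.erase x) N) : N.card = alphaIn G univ := by
  classical
  obtain ⟨W, hWmem, hWmax⟩ := exists_max_image
    (univ.powerset.filter fun W => x ∉ W ∧ IsIndep G W ∧ W.card = alphaIn G univ)
    (fun W => (N ∩ W).card) (by obtain ⟨W, hW⟩ := hW₀; exact ⟨W, by simpa using hW⟩)
  simp only [mem_filter, mem_powerset] at hWmem hWmax
  obtain ⟨-, hxW, hW, hWcard⟩ := hWmem
  by_cases hNW : N ⊆ W
  · rw [hN.eq_of_subset (fun v hv => mem_erase.2 ⟨ne_of_mem_of_not_mem hv hxW, mem_univ v⟩)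
      hW hNW, hWcard]
  obtain ⟨u, huN, huW⟩ := not_subset.1 hNW
  obtain ⟨w₀, hw₀W, hw₀u⟩ :=
    (isMaxIndepIn_of_card_eq_alphaIn (subset_univ W) hW hWcard).exists_adj (mem_univ u) huW
  have hx : ∀ w ∈ W, G.Adj u w →
      ∃ A, IsMaxIndepIn G (locE G u w) A ∧ W \ nbr G u ⊆ A ∧ x ∈ A := by
    intro w hw huw
    obtain ⟨A, hA, hWA⟩ := hW.exists_isMaxIndepIn_locE_superset_sdiff u hw
    refine ⟨A, hA, hWA, ?_⟩
    -- otherwise `A ∪ {u}` would be a better choice than `W`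
    by_contra hxA
    obtain ⟨hind, hcard⟩ := H.isIndep_insert_and_card_eq huw hA
    have hux : u ≠ x := ne_of_mem_erase (hN.1 huN)
    have hle := hWmax (insert u A)
      ⟨subset_univ _, fun h => (mem_insert.1 h).elim hux.symm hxA, hind, hcard⟩
    have hgain : insert u (N ∩ W) ⊆ N ∩ insert u A := insert_subset
      (mem_inter.2 ⟨huN, mem_insert_self u A⟩) fun m hm => by
        rw [mem_inter] at hm
        refine mem_inter.2 ⟨hm.1, mem_insert_of_mem (hWA (mem_sdiff.2 ⟨hm.2, ?_⟩))⟩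
        exact fun hm' => hN.2.1 u huN m hm.1 (mem_nbr.1 hm')
    have := card_le_card hgain
    rw [card_insert_of_notMem fun h => huW (mem_inter.1 h).2] at this
    omega
  have hxW' : IsIndep G (insert x W) := hW.insert fun m hm hmx => by
    by_cases hum : G.Adj u m
    · obtain ⟨A, hA, -, hxA⟩ := hx m hm hum
      exact (mem_locE.1 (hA.1 hxA)).2 hmx
    · obtain ⟨A, hA, hWA, hxA⟩ := hx w₀ hw₀W hw₀u.symm
      exact hA.2.1 m (hWA (mem_sdiff.2 ⟨hm, fun h => hum (mem_nbr.1 h)⟩)) x hxA hmx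
  have := card_le_alphaIn (subset_univ _) hxW'
  rw [card_insert_of_notMem hxW] at this
  omega

theorem w2In (hni : ∀ v : V, ∃ u : V, G.Adj v u) : W2In G univ := by
  have hcard : ∀ x N, IsMaxIndepIn G (univ.erase x) N → N.card = alphaIn G univ :=
    fun x _ => H.card_eq_of_isMaxIndepIn_erase (H.exists_card_eq_alphaIn_notMem (hni x).choose_spec)
  refine ⟨fun M hM => ?_, fun x _ => wellCoveredIn_and_alphaIn_eq_iff.2 (hcard x)⟩
  by_cases hMu : M = univ
  · subst hMu
    obtain ⟨S, -, -, hSc⟩ := exists_card_eq_alphaIn G univ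
    exact le_antisymm (card_le_alphaIn (Subset.refl _) hM.2.1) (hSc ▸ card_le_univ S)
  obtain ⟨x, hx⟩ : ∃ x, x ∉ M := by simpa [eq_univ_iff_forall] using hMu
  exact hcard x M (hM.of_subset (fun v hv => mem_erase.2 ⟨ne_of_mem_of_not_mem hv hx, mem_univ v⟩)
    (erase_subset x univ))

end EdgeLocalizationsWellCovered

theorem W2In.exists_isIndep_insert (h : W2In G univ) {x : V} {S : Finset V} (hS : IsIndep G S)
    (hxS : x ∉ S) (hcard : S.card < alphaIn G univ) :
    ∃ z ≠ x, z ∉ S ∧ IsIndep G (insert z S) := by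
  by_contra! hno
  have hS' : IsMaxIndepIn G (univ.erase x) S :=
    ⟨fun v hv => mem_erase.2 ⟨ne_of_mem_of_not_mem hv hxS, mem_univ v⟩, hS,
      fun z hz => hno z (ne_of_mem_erase hz)⟩
  have ⟨hwc, hα⟩ := h.2 x (mem_univ x)
  have := hwc S hS'
  omega

theorem W2In.edgeLocalizationsWellCovered (htf : G.CliqueFree 3) (h : W2In G univ) :
    EdgeLocalizationsWellCovered G := by
  intro a b hab T hT
  have hbT : b ∉ T := fun hb => (mem_locE.1 (hT.1 hb)).1 hab
  obtain ⟨M, hTM, hM⟩ := exists_isMaxIndepIn_superset (subset_univ _)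
    (hT.2.1.insert fun m hm hmb => (mem_locE.1 (hT.1 hm)).2 hmb.symm)
  suffices M ⊆ insert b T by
    rw [← card_insert_of_notMem hbT, ← Subset.antisymm this hTM]
    exact h.1 M hM
  intro p hpM
  by_contra hp
  have hpT : p ∉ T := fun h => hp (mem_insert_of_mem h)
  have hbM : b ∈ M := hTM (mem_insert_self b T)
  have hap : G.Adj a p := by
    by_contra hap
    exact hT.2.2 p (mem_locE.2 ⟨hap, hM.2.1 b hbM p hpM⟩) hpT
      (hM.2.1.mono (insert_subset hpM ((subset_insert b T).trans hTM)))
  have hcard : (M.erase p).card < alphaIn G univ := by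
    have := one_le_alphaIn (G := G) (mem_univ p)
    rw [card_erase_of_mem hpM, h.1 M hM]
    omega
  obtain ⟨z, hzp, hzS, hz⟩ :=
    h.exists_isIndep_insert (hM.2.1.mono (erase_subset p M)) (notMem_erase p M) hcard
  have hzM : z ∉ M := fun h => hzS (mem_erase.2 ⟨hzp, h⟩)
  obtain ⟨m, hmM, hmz⟩ := hM.exists_adj (mem_univ z) hzM
  obtain rfl : m = p := by
    by_contra hmp
    exact hz m (mem_insert_of_mem (mem_erase.2 ⟨hmp, hmM⟩)) z (mem_insert_self z _) hmz
  have hbp : b ≠ m := fun h => hp (h ▸ mem_insert_self b T)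
  have hzloc : z ∈ locE G a b := mem_locE.2
    ⟨fun haz => htf _ (SimpleGraph.is3Clique_triple_iff.2 ⟨hap, haz, hmz⟩),
      hz b (mem_insert_of_mem (mem_erase.2 ⟨hbp, hbM⟩)) z (mem_insert_self z _)⟩
  exact hT.2.2 z hzloc (fun h => hzM (hTM (mem_insert_of_mem h)))
    (hz.mono (insert_subset_insert z fun t ht =>
      mem_erase.2 ⟨fun h => hpT (h ▸ ht), hTM (mem_insert_of_mem ht)⟩))

end

section EdgeIdealPaper

variable {V : Type*} [Fintype V] [DecidableEq V]

/-- A triangle-free graph without isolated vertices is in `W₂` if and only if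
`G_{ab}` is well-covered with `α(G_{ab}) = α(G) - 1` for every edge `ab`. -/
theorem stmt5 (G : SimpleGraph V) (htf : G.CliqueFree 3)
    (hni : ∀ v : V, ∃ u : V, G.Adj v u) :
    W2In G Finset.univ ↔
      ∀ a b : V, G.Adj a b → WellCoveredIn G (locE G a b) ∧
        alphaIn G (locE G a b) = alphaIn G Finset.univ - 1 := by
  rw [← edgeLocalizationsWellCovered_iff]
  exact ⟨W2In.edgeLocalizationsWellCovered htf, fun H => H.w2In hni⟩

end EdgeIdealPaper
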